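/- Let γ_{ch} = σ(η) γ^0 γ^1 γ^2 γ^3 with σ(η) = (−i)^{(q−p)(q−p+1)/2}, and assume γ_{ch}² = 1_k. Let 𝖪_μ, 𝖠_μ ∈ M_m(ℂ), define 𝔡_μ = {𝖪_μ + 𝖠_μ, ·}_{e_μ} on M_m(ℂ), 𝔉_{μν} = [𝔡_μ, 𝔡_ν], θ = Σ_{μ,ν} η^{μν} 𝔡_μ ∘ 𝔡_ν, let Φ be any linear operator on M_m(ℂ), and set D_ω = Σ_μ γ^μ ⊗ 𝔡_μ + γ_{ch} ⊗ Φ on ℂ^k ⊗ M_m(ℂ). Then D_ω² = (1/2) Σ_{μ,ν} γ^μ γ^ν ⊗ 𝔉_{μν} + 1_k ⊗ (θ + Φ∘Φ) + Σ_μ γ^μ γ_{ch} ⊗ [𝔡_μ, Φ]. (Paper: Corollary 6.2, the flat Weitzenböck formula with Higgs term.) -/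

import Mathlib

/-!
Expanding `D_ω²` gives three kinds of terms. Since `γ^μ γ^ν ⊗ 𝔡_μ 𝔡_ν` splits into halves of
`γ^μ γ^ν ⊗ [𝔡_μ, 𝔡_ν]` and `γ^μ γ^ν ⊗ {𝔡_μ, 𝔡_ν}`, and after swapping `μ, ν` in the latter the
Clifford relation turns `γ^μ γ^ν + γ^ν γ^μ` into `2 η^{μν}`, the Dirac part squares to the curvature
plus `1 ⊗ θ`. The chirality element, a multiple of the product of the four pairwise anticommuting
`γ^μ`, anticommutes with each of them, so the mixed terms combine into commutators `[𝔡_μ, Φ]`,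
and `γ_ch² = 1` leaves `1 ⊗ Φ²`.
-/

open Matrix

noncomputable section

/-- The operator `g ⊗ T` on `ℂ^k ⊗ M_m(ℂ) ≅ (Fin k → M_m(ℂ))`. -/
def matOp {k : ℕ} {V : Type*} [AddCommGroup V] [Module ℂ V]
    (g : Matrix (Fin k) (Fin k) ℂ) (T : Module.End ℂ V) :
    Module.End ℂ (Fin k → V) where
  toFun f i := ∑ j, g i j • T (f j)
  map_add' f h := by
    funext i
    simp [map_add, smul_add, Finset.sum_add_distrib]
  map_smul' c f := by
    funext i
    simp only [Pi.smul_apply, _root_.map_smul, RingHom.id_apply]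
    rw [Finset.smul_sum]
    exact Finset.sum_congr rfl fun j _ => smul_comm _ _ _

/-- The generalized (anti-)commutator `{M, ·}_e : T ↦ M T + e T M`. -/
def brkt {m : ℕ} (M : Matrix (Fin m) (Fin m) ℂ) (e : ℂ) :
    Module.End ℂ (Matrix (Fin m) (Fin m) ℂ) :=
  LinearMap.mulLeft ℂ M + e • LinearMap.mulRight ℂ M

theorem mul_prod_map_of_anticomm {R ι : Type*} [Ring R] [DecidableEq ι] (γ : ι → R)
    (hanti : ∀ μ ν, μ ≠ ν → γ μ * γ ν = -(γ ν * γ μ)) (μ : ι) (l : List ι) :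
    γ μ * (l.map γ).prod = (-1 : ℤ) ^ l.countP (· ≠ μ) • ((l.map γ).prod * γ μ) := by
  induction l with
  | nil => simp
  | cons ν l ih =>
    rw [List.map_cons, List.prod_cons, ← mul_assoc]
    by_cases hν : ν = μ
    · subst hν
      rw [List.countP_cons_of_neg (by simp)]
      conv_lhs => rw [mul_assoc, ih, mul_smul_comm, ← mul_assoc]
    · rw [hanti μ ν (Ne.symm hν), List.countP_cons_of_pos (by simpa using hν), pow_succ,
        neg_mul, mul_assoc, ih, mul_smul_comm, mul_smul, ← mul_assoc]
      simp

section matOp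

variable {k : ℕ} {V : Type*} [AddCommGroup V] [Module ℂ V]

theorem matOp_apply (g : Matrix (Fin k) (Fin k) ℂ) (T : Module.End ℂ V) (f : Fin k → V)
    (i : Fin k) : matOp g T f i = ∑ j, g i j • T (f j) :=
  rfl

theorem matOp_mul_matOp (g h : Matrix (Fin k) (Fin k) ℂ) (T S : Module.End ℂ V) :
    matOp g T * matOp h S = matOp (g * h) (T * S) := by
  refine LinearMap.ext fun f => funext fun i => ?_
  simp only [Module.End.mul_apply, matOp_apply, map_sum, _root_.map_smul, Finset.smul_sum,
    smul_smul, Matrix.mul_apply, Finset.sum_smul]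
  exact Finset.sum_comm

theorem matOp_add_left (g g' : Matrix (Fin k) (Fin k) ℂ) (T : Module.End ℂ V) :
    matOp (g + g') T = matOp g T + matOp g' T := by
  ext f i
  simp [matOp_apply, add_smul, Finset.sum_add_distrib]

theorem matOp_add_right (g : Matrix (Fin k) (Fin k) ℂ) (T S : Module.End ℂ V) :
    matOp g (T + S) = matOp g T + matOp g S := by
  ext f i
  simp [matOp_apply, Finset.sum_add_distrib]

theorem matOp_smul_left (c : ℂ) (g : Matrix (Fin k) (Fin k) ℂ) (T : Module.End ℂ V) :
    matOp (c • g) T = c • matOp g T := by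
  ext f i
  simp [matOp_apply, smul_smul, Finset.smul_sum]

theorem matOp_smul_right (c : ℂ) (g : Matrix (Fin k) (Fin k) ℂ) (T : Module.End ℂ V) :
    matOp g (c • T) = c • matOp g T := by
  ext f i
  simp [matOp_apply, Finset.smul_sum, smul_comm c]

theorem matOp_neg_left (g : Matrix (Fin k) (Fin k) ℂ) (T : Module.End ℂ V) :
    matOp (-g) T = -matOp g T :=
  map_neg (AddMonoidHom.mk' (matOp · T) (matOp_add_left · · T)) g

theorem matOp_sub_right (g : Matrix (Fin k) (Fin k) ℂ) (T S : Module.End ℂ V) :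
    matOp g (T - S) = matOp g T - matOp g S :=
  map_sub (AddMonoidHom.mk' (matOp g) (matOp_add_right g)) T S

theorem matOp_sum_right {ι : Type*} (s : Finset ι) (g : Matrix (Fin k) (Fin k) ℂ)
    (T : ι → Module.End ℂ V) : matOp g (∑ i ∈ s, T i) = ∑ i ∈ s, matOp g (T i) :=
  map_sum (AddMonoidHom.mk' (matOp g) (matOp_add_right g)) T s

end matOp

section Dirac

variable {k : ℕ} {V : Type*} [AddCommGroup V] [Module ℂ V] {ι : Type*} [Fintype ι]

theorem sum_matOp_mul_self_of_clifford (γ : ι → Matrix (Fin k) (Fin k) ℂ) (η : ι → ι → ℂ)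
    (hCl : ∀ μ ν, γ μ * γ ν + γ ν * γ μ = (2 * η μ ν) • (1 : Matrix (Fin k) (Fin k) ℂ))
    (d : ι → Module.End ℂ V) :
    (∑ μ, matOp (γ μ) (d μ)) * (∑ ν, matOp (γ ν) (d ν)) =
      (1 / 2 : ℂ) • (∑ μ, ∑ ν, matOp (γ μ * γ ν) (d μ * d ν - d ν * d μ))
        + matOp 1 (∑ μ, ∑ ν, η μ ν • (d μ * d ν)) := by
  set S := ∑ μ, ∑ ν, matOp (γ μ * γ ν) (d μ * d ν)
  set S' := ∑ μ, ∑ ν, matOp (γ ν * γ μ) (d μ * d ν)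
  have hsq : (∑ μ, matOp (γ μ) (d μ)) * (∑ ν, matOp (γ ν) (d ν)) = S := by
    simp only [Finset.sum_mul_sum, matOp_mul_matOp, S]
  have hcomm : ∑ μ, ∑ ν, matOp (γ μ * γ ν) (d μ * d ν - d ν * d μ) = S - S' := by
    simp only [matOp_sub_right, Finset.sum_sub_distrib, S, S']
    rw [Finset.sum_comm (f := fun μ ν => matOp (γ μ * γ ν) (d ν * d μ))]
  have hanticomm : S + S' = (2 : ℂ) • matOp 1 (∑ μ, ∑ ν, η μ ν • (d μ * d ν)) := by
    simp only [S, S', ← Finset.sum_add_distrib, ← matOp_add_left, hCl, matOp_sum_right,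
      Finset.smul_sum, matOp_smul_left, matOp_smul_right, mul_smul]
  rw [hsq, hcomm]
  linear_combination (norm := module) (1 / 2 : ℂ) • hanticomm

theorem sum_matOp_mul_add_mul_sum_of_anticomm (γ : ι → Matrix (Fin k) (Fin k) ℂ)
    (c : Matrix (Fin k) (Fin k) ℂ) (hc : ∀ μ, c * γ μ = -(γ μ * c)) (d : ι → Module.End ℂ V)
    (Φ : Module.End ℂ V) :
    (∑ μ, matOp (γ μ) (d μ)) * matOp c Φ + matOp c Φ * (∑ μ, matOp (γ μ) (d μ)) =
      ∑ μ, matOp (γ μ * c) (d μ * Φ - Φ * d μ) := by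
  simp only [Finset.sum_mul, Finset.mul_sum, ← Finset.sum_add_distrib, matOp_mul_matOp, hc,
    matOp_neg_left, ← sub_eq_add_neg, matOp_sub_right]

theorem dirac_mul_self (γ : ι → Matrix (Fin k) (Fin k) ℂ) (η : ι → ι → ℂ)
    (hCl : ∀ μ ν, γ μ * γ ν + γ ν * γ μ = (2 * η μ ν) • (1 : Matrix (Fin k) (Fin k) ℂ))
    (c : Matrix (Fin k) (Fin k) ℂ) (hc : ∀ μ, c * γ μ = -(γ μ * c)) (hc2 : c * c = 1)
    (d : ι → Module.End ℂ V) (Φ : Module.End ℂ V) :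
    ((∑ μ, matOp (γ μ) (d μ)) + matOp c Φ) * ((∑ μ, matOp (γ μ) (d μ)) + matOp c Φ) =
      (1 / 2 : ℂ) • (∑ μ, ∑ ν, matOp (γ μ * γ ν) (d μ * d ν - d ν * d μ))
        + matOp 1 ((∑ μ, ∑ ν, η μ ν • (d μ * d ν)) + Φ * Φ)
        + ∑ μ, matOp (γ μ * c) (d μ * Φ - Φ * d μ) := by
  rw [add_mul, mul_add, mul_add, sum_matOp_mul_self_of_clifford γ η hCl, matOp_mul_matOp c c, hc2,
    ← sum_matOp_mul_add_mul_sum_of_anticomm γ c hc, matOp_add_right]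
  abel

end Dirac

theorem stmt15_general (p q k m : ℕ)
    (e : Fin 4 → ℂ)
    (γ : Fin 4 → Matrix (Fin k) (Fin k) ℂ)
    (hCl : ∀ μ ν, γ μ * γ ν + γ ν * γ μ =
      (2 * if μ = ν then e μ else 0) • (1 : Matrix (Fin k) (Fin k) ℂ))
    (γch : Matrix (Fin k) (Fin k) ℂ)
    (hγch : γch =
      ((-Complex.I) ^ ((((q : ℤ) - (p : ℤ)) * ((q : ℤ) - (p : ℤ) + 1)) / 2)) •
        (γ 0 * γ 1 * γ 2 * γ 3))
    (hγch2 : γch * γch = 1)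
    (dop : Fin 4 → Module.End ℂ (Matrix (Fin m) (Fin m) ℂ))
    (F : Fin 4 → Fin 4 → Module.End ℂ (Matrix (Fin m) (Fin m) ℂ))
    (hF : ∀ μ ν, F μ ν = dop μ * dop ν - dop ν * dop μ)
    (θ : Module.End ℂ (Matrix (Fin m) (Fin m) ℂ))
    (hθ : θ = ∑ μ, ∑ ν, (if μ = ν then e μ else 0) • (dop μ * dop ν))
    (Φ : Module.End ℂ (Matrix (Fin m) (Fin m) ℂ))
    (Dω : Module.End ℂ (Fin k → Matrix (Fin m) (Fin m) ℂ))
    (hDω : Dω = (∑ μ, matOp (γ μ) (dop μ)) + matOp γch Φ) :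
    Dω * Dω =
      (1 / 2 : ℂ) • (∑ μ, ∑ ν, matOp (γ μ * γ ν) (F μ ν))
        + matOp 1 (θ + Φ * Φ)
        + ∑ μ, matOp (γ μ * γch) (dop μ * Φ - Φ * dop μ) := by
  have hanti : ∀ μ ν, μ ≠ ν → γ μ * γ ν = -(γ ν * γ μ) := fun μ ν hμν =>
    eq_neg_of_add_eq_zero_left (by simpa [hμν] using hCl μ ν)
  have hch : ∀ μ, γch * γ μ = -(γ μ * γch) := by
    intro μ
    have hcount : [0, 1, 2, 3].countP (· ≠ μ) = 3 := by fin_cases μ <;> rfl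
    have h := mul_prod_map_of_anticomm γ hanti μ [0, 1, 2, 3]
    simp only [hcount, List.map_cons, List.map_nil, List.prod_cons, List.prod_nil, mul_one] at h
    rw [hγch, smul_mul_assoc, mul_smul_comm, ← smul_neg]
    simp [h, mul_assoc]
  simp only [hDω, hθ, hF]
  exact dirac_mul_self γ _ hCl γch hch hγch2 dop Φ

theorem stmt15 (p q k m : ℕ) (hpq : p + q = 4) (hk : 1 ≤ k) (hm : 1 ≤ m)
    (e : Fin 4 → ℂ) (he : ∀ μ, e μ = if (μ : ℕ) < p then 1 else -1)
    (γ : Fin 4 → Matrix (Fin k) (Fin k) ℂ)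
    (hCl : ∀ μ ν, γ μ * γ ν + γ ν * γ μ =
      (2 * if μ = ν then e μ else 0) • (1 : Matrix (Fin k) (Fin k) ℂ))
    (hAdj : ∀ μ, (γ μ)ᴴ = e μ • γ μ)
    (γch : Matrix (Fin k) (Fin k) ℂ)
    (hγch : γch =
      ((-Complex.I) ^ ((((q : ℤ) - (p : ℤ)) * ((q : ℤ) - (p : ℤ) + 1)) / 2)) •
        (γ 0 * γ 1 * γ 2 * γ 3))
    (hγch2 : γch * γch = 1)
    (K A : Fin 4 → Matrix (Fin m) (Fin m) ℂ)
    (dop : Fin 4 → Module.End ℂ (Matrix (Fin m) (Fin m) ℂ))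
    (hdop : ∀ μ, dop μ = brkt (K μ + A μ) (e μ))
    (F : Fin 4 → Fin 4 → Module.End ℂ (Matrix (Fin m) (Fin m) ℂ))
    (hF : ∀ μ ν, F μ ν = dop μ * dop ν - dop ν * dop μ)
    (θ : Module.End ℂ (Matrix (Fin m) (Fin m) ℂ))
    (hθ : θ = ∑ μ, ∑ ν, (if μ = ν then e μ else 0) • (dop μ * dop ν))
    (Φ : Module.End ℂ (Matrix (Fin m) (Fin m) ℂ))
    (Dω : Module.End ℂ (Fin k → Matrix (Fin m) (Fin m) ℂ))
    (hDω : Dω = (∑ μ, matOp (γ μ) (dop μ)) + matOp γch Φ) :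
    Dω * Dω =
      (1 / 2 : ℂ) • (∑ μ, ∑ ν, matOp (γ μ * γ ν) (F μ ν))
        + matOp 1 (θ + Φ * Φ)
        + ∑ μ, matOp (γ μ * γch) (dop μ * Φ - Φ * dop μ) :=
  stmt15_general p q k m e γ hCl γch hγch hγch2 dop F hF θ hθ Φ Dω hDω
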